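/- arXiv:1906.01518 — 5 statements merged into one kernel-verified Lean document; each statement's English description precedes it below -/
import Mathlib

section
/- Let G be a compact Hausdorff topological group with Haar probability measure μ, let r ≥ 1, and let π : G → U(V) be a continuous unitary representation of G on a nonzero finite-dimensional complex inner product space V. Define τ_{G,π}(w) = ∫_{G^r} tr(π(w(g))) dμ^r(g) for w ∈ F_r. Then τ_{G,π} is a positive definite function on F_r: for every finite subset S ⊆ F_r and every function α : F_r → ℂ, the sum ∑_{w,w'∈S} τ_{G,π}(w' w⁻¹) α(w') conj(α(w)) is a nonnegative real number. -/
/-!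
For fixed `g ∈ G^r`, `w ↦ π(w(g))` is a unitary representation of `F_r`, and for such a
representation the quadratic form `∑ tr(π(γ'γ⁻¹)) a(γ') conj(a(γ))` equals `tr(B B*)` with
`B = ∑ a(γ) π(γ)`, hence is nonnegative. Positive definiteness survives integration over `g`,
the integrands being bounded because unitaries have norm at most one.
-/

open MeasureTheory ComplexOrder

/-- A function `τ : Γ → ℂ` on a group is positive definite if for every finite subset
`S ⊆ Γ` and every `α : Γ → ℂ`, the sum `∑_{γ,γ'∈S} τ(γ'γ⁻¹) α(γ') conj(α(γ))` is a
nonnegative real number (i.e. `≥ 0` in the complex order). -/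
def IsPositiveDefinite {Γ : Type*} [Group Γ] (τ : Γ → ℂ) : Prop :=
  ∀ (S : Finset Γ) (a : Γ → ℂ),
    0 ≤ ∑ γ ∈ S, ∑ γ' ∈ S, τ (γ' * γ⁻¹) * a γ' * (starRingEnd ℂ) (a γ)

section

variable {Γ : Type*} [Group Γ]

theorem IsPositiveDefinite.integral {X : Type*} [MeasurableSpace X] {μ : Measure X}
    {f : X → Γ → ℂ} (hf : ∀ x, IsPositiveDefinite (f x))
    (hint : ∀ γ, Integrable (fun x => f x γ) μ) :
    IsPositiveDefinite fun γ => ∫ x, f x γ ∂μ := by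
  intro S a
  have hsummand : ∀ γ γ', Integrable (fun x => f x (γ' * γ⁻¹) * a γ' * starRingEnd ℂ (a γ)) μ :=
    fun γ γ' => ((hint _).mul_const _).mul_const _
  calc (0 : ℂ) ≤ ∫ x, ∑ γ ∈ S, ∑ γ' ∈ S, f x (γ' * γ⁻¹) * a γ' * starRingEnd ℂ (a γ) ∂μ :=
        integral_nonneg fun x => hf x S a
    _ = _ := by
      rw [integral_finsetSum S fun γ _ => integrable_finsetSum S fun γ' _ => hsummand γ γ']
      refine Finset.sum_congr rfl fun γ _ => ?_
      rw [integral_finsetSum S fun γ' _ => hsummand γ γ']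
      simp only [integral_mul_const]

theorem IsPositiveDefinite.of_unitary {A : Type*} [Ring A] [StarRing A] [PartialOrder A]
    [StarOrderedRing A] [Algebra ℂ A] [StarModule ℂ A]
    (ρ : Γ →* unitary A) (φ : A →ₚ[ℂ] ℂ) : IsPositiveDefinite fun γ => φ (ρ γ) := by
  intro S a
  set B := ∑ γ ∈ S, a γ • (ρ γ : A)
  have hB : B * star B = ∑ γ ∈ S, ∑ γ' ∈ S, (a γ' * starRingEnd ℂ (a γ)) • (ρ (γ' * γ⁻¹) : A) := by
    rw [star_sum, Finset.sum_mul_sum, Finset.sum_comm]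
    refine Finset.sum_congr rfl fun γ _ => Finset.sum_congr rfl fun γ' _ => ?_
    rw [star_smul, smul_mul_smul_comm, map_mul, map_inv, Submonoid.coe_mul, ← Unitary.coe_star,
      Unitary.star_eq_inv]
    rfl
  calc (0 : ℂ) ≤ φ (B * star B) := φ.map_nonneg (mul_star_self_nonneg B)
    _ = _ := by
      simp only [hB, map_sum, map_smul, smul_eq_mul]
      exact Finset.sum_congr rfl fun γ _ => Finset.sum_congr rfl fun γ' _ => by ring

end

/- Measurability is tracked in the product σ-algebra on `ι → G`, which can be coarser than the
Borel σ-algebra of the product topology, so continuity of word maps would not suffice. -/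
theorem stronglyMeasurable_freeGroupLift {G ι A : Type*} [Group G] [MeasurableSpace G]
    [Monoid A] [StarMul A] [TopologicalSpace A] [ContinuousMul A] [ContinuousStar A]
    (ρ : G →* unitary A) (hρ : StronglyMeasurable fun g => (ρ g : A)) (w : FreeGroup ι) :
    StronglyMeasurable fun x : ι → G => (ρ (FreeGroup.lift x w) : A) := by
  induction w using FreeGroup.induction_on with
  | C1 => simpa using stronglyMeasurable_const
  | of i =>
    simp only [FreeGroup.lift_apply_of]
    exact hρ.comp_measurable (measurable_pi_apply i)
  | inv_of i h =>
    simpa [← Unitary.star_eq_inv] using continuous_star.comp_stronglyMeasurable h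
  | mul v w hv hw =>
    simp only [map_mul, Submonoid.coe_mul]
    exact hv.mul hw

theorem integrable_apply_coe_unitary {X A : Type*} [MeasurableSpace X] {μ : Measure X}
    [IsFiniteMeasure μ] [NormedRing A] [StarRing A] [CStarRing A] [NormedSpace ℂ A]
    (L : A →L[ℂ] ℂ) {F : X → unitary A} (hF : StronglyMeasurable fun x => (F x : A)) :
    Integrable (fun x => L (F x)) μ := by
  refine .of_bound (L.continuous.comp_stronglyMeasurable hF).aestronglyMeasurable ‖L‖
    (ae_of_all _ fun x => ?_)
  rcases subsingleton_or_nontrivial A with hA | hA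
  · simp [Subsingleton.elim (F x : A) 0]
  · simpa [CStarRing.norm_coe_unitary] using L.le_opNorm (F x)

theorem tau_isPositiveDefinite_general {G : Type*} [Group G] [TopologicalSpace G]
    [MeasurableSpace G] [BorelSpace G]
    (μ : Measure G) [IsProbabilityMeasure μ]
    (r : ℕ)
    {V : Type*} [NormedAddCommGroup V] [InnerProductSpace ℂ V] [FiniteDimensional ℂ V]
    (π : G →* unitary (V →L[ℂ] V)) (hπ : Continuous fun g : G => (π g : V →L[ℂ] V)) :
    IsPositiveDefinite (fun w : FreeGroup (Fin r) =>
      ∫ g : Fin r → G, LinearMap.trace ℂ V ((π (FreeGroup.lift g w) : V →L[ℂ] V) : V →ₗ[ℂ] V)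
        ∂(Measure.pi fun _ => μ)) := by
  let trace : (V →L[ℂ] V) →ₗ[ℂ] ℂ := LinearMap.trace ℂ V ∘ₗ ContinuousLinearMap.coeLM ℂ
  refine IsPositiveDefinite.integral (fun g => ?_) fun w => ?_
  · exact IsPositiveDefinite.of_unitary (π.comp (FreeGroup.lift g)) (.mk₀ trace fun A hA =>
      ((ContinuousLinearMap.nonneg_iff_isPositive A).mp hA).toLinearMap.trace_nonneg)
  · exact integrable_apply_coe_unitary (LinearMap.toContinuousLinearMap trace)
      (stronglyMeasurable_freeGroupLift π hπ.stronglyMeasurable w)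

/-- For a compact Hausdorff group `G` with Haar probability measure `μ`
and a continuous finite-dimensional unitary representation `π` of `G` on a nonzero
complex inner product space `V`, the function
`τ_{G,π}(w) = ∫_{G^r} tr(π(w(g))) dμ^r(g)` is positive definite on `F_r`. -/
theorem tau_isPositiveDefinite {G : Type*} [Group G] [TopologicalSpace G] [IsTopologicalGroup G]
    [CompactSpace G] [T2Space G] [MeasurableSpace G] [BorelSpace G]
    (μ : Measure G) [μ.IsHaarMeasure] [IsProbabilityMeasure μ]
    (r : ℕ) (hr : 1 ≤ r)
    {V : Type*} [NormedAddCommGroup V] [InnerProductSpace ℂ V] [FiniteDimensional ℂ V]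
    [Nontrivial V]
    (π : G →* unitary (V →L[ℂ] V)) (hπ : Continuous fun g : G => (π g : V →L[ℂ] V)) :
    IsPositiveDefinite (fun w : FreeGroup (Fin r) =>
      ∫ g : Fin r → G, LinearMap.trace ℂ V ((π (FreeGroup.lift g w) : V →L[ℂ] V) : V →ₗ[ℂ] V)
        ∂(Measure.pi fun _ => μ)) :=
  tau_isPositiveDefinite_general μ r π hπ
end

section
/- Let G be a compact Hausdorff topological group with Haar probability measure μ, let g ≥ 1 and r ≥ g, and let t_g = x_1²⋯x_g² ∈ F_r be the non-orientable surface word. Then for every continuous irreducible unitary representation π of G on a nonzero finite-dimensional complex inner product space V, ∫_{G^r} tr(π(t_g(𝐠))) dμ^r(𝐠) = FS(π)^g / (dim V)^{g-1}, where FS(π) = ∫_G tr(π(h·h)) dμ(h) is the Frobenius–Schur indicator of π. -/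
open MeasureTheory

/-- A unitary representation `π` of a group `G` on a complex inner product space `V` is
irreducible if the only `π(G)`-invariant subspaces of `V` are `⊥` and `⊤`. -/
def IsIrreducibleRep {G V : Type*} [Group G] [NormedAddCommGroup V] [InnerProductSpace ℂ V]
    [CompleteSpace V] (π : G →* unitary (V →L[ℂ] V)) : Prop :=
  ∀ U : Submodule ℂ V, (∀ (g : G), ∀ v ∈ U, (π g : V →L[ℂ] V) v ∈ U) → U = ⊥ ∨ U = ⊤

/-- The non-orientable surface word `t_g = x_1²⋯x_g² ∈ F_r` (for `g ≤ r`), with generators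
indexed from `0`. -/
def nonorientableSurfaceWord (g r : ℕ) (h : g ≤ r) : FreeGroup (Fin r) :=
  (List.ofFn fun i : Fin g =>
    FreeGroup.of (⟨(i : ℕ), by omega⟩ : Fin r) *
    FreeGroup.of (⟨(i : ℕ), by omega⟩ : Fin r)).prod

/-! The average `T = ∫ π(h²) dμ(h)` commutes with `π`, because Haar measure on a compact group
is invariant under conjugation; by Schur's lemma `T = c • 1`, and taking traces gives
`c = FS(π) / dim V`. The coordinates of `𝐠` are independent under `μ^r`, so the integral of
`π(t_g(𝐠)) = π(g₁²) ⋯ π(g_g²)` is the ordered product `T ^ g = c ^ g • 1`, of trace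
`c ^ g * dim V`. -/

theorem integral_prod_mul_of_integrable {X Y A : Type*} [MeasurableSpace X] [MeasurableSpace Y]
    [NormedRing A] [NormedSpace ℝ A] [IsScalarTower ℝ A A] [SMulCommClass ℝ A A]
    {μ : Measure X} {ν : Measure Y} [SFinite μ] [SFinite ν] {f : X → A} {g : Y → A}
    (hf : Integrable f μ) (hg : Integrable g ν) :
    ∫ z, f z.1 * g z.2 ∂μ.prod ν = (∫ x, f x ∂μ) * ∫ y, g y ∂ν := by
  rw [integral_prod _ (hf.mul_prod hg)]
  simp_rw [integral_const_mul_of_integrable hg]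
  exact integral_mul_const_of_integrable hf

def prefixProd {X M : Type*} [Monoid M] (f : X → M) {m n : ℕ} (h : m ≤ n) (x : Fin n → X) : M :=
  (List.ofFn fun i : Fin m => f (x (Fin.castLE h i))).prod

theorem prefixProd_cons {X M : Type*} [Monoid M] (f : X → M) {m n : ℕ} (h : m + 1 ≤ n + 1)
    (a : X) (y : Fin n → X) :
    prefixProd f h (Fin.cons a y) = f a * prefixProd f (Nat.le_of_succ_le_succ h) y := by
  simp [prefixProd, List.ofFn_succ, Fin.castLE_succ]

theorem map_lift_nonorientableSurfaceWord {G M : Type*} [Group G] [Monoid M] (φ : G →* M)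
    {g r : ℕ} (hr : g ≤ r) (gs : Fin r → G) :
    φ (FreeGroup.lift gs (nonorientableSurfaceWord g r hr)) =
      prefixProd (fun h => φ (h * h)) hr gs := by
  simp only [nonorientableSurfaceWord, prefixProd, map_list_prod, List.map_ofFn,
    Function.comp_def, map_mul, FreeGroup.lift_apply_of]
  rfl

section PrefixProdIntegral

variable {X A : Type*} [MeasurableSpace X] [NormedRing A] {μ : Measure X} {f : X → A}

theorem prefixProd_piFinSuccAbove_zero_symm {m n : ℕ} (h : m + 1 ≤ n + 1)
    (q : X × (Fin n → X)) :
    prefixProd f h ((MeasurableEquiv.piFinSuccAbove (fun _ => X) 0).symm q) =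
      f q.1 * prefixProd f (Nat.le_of_succ_le_succ h) q.2 := by
  rw [MeasurableEquiv.piFinSuccAbove_symm_apply, Fin.insertNthEquiv_zero]
  exact prefixProd_cons f h q.1 q.2

theorem integrable_prefixProd [IsFiniteMeasure μ] (hf : Integrable f μ) {m n : ℕ} (h : m ≤ n) :
    Integrable (prefixProd f h) (Measure.pi fun _ => μ) := by
  induction m generalizing n with
  | zero => exact integrable_const 1
  | succ m ih =>
    obtain ⟨n, rfl⟩ : ∃ k, n = k + 1 := ⟨n - 1, by omega⟩
    rw [← (measurePreserving_piFinSuccAbove (fun _ => μ) 0).symm.integrable_comp_emb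
      (MeasurableEquiv.measurableEmbedding _)]
    simp_rw [Function.comp_def, prefixProd_piFinSuccAbove_zero_symm]
    exact hf.mul_prod (ih _)

theorem integral_prefixProd [NormedSpace ℝ A] [IsScalarTower ℝ A A] [SMulCommClass ℝ A A]
    [CompleteSpace A] [IsProbabilityMeasure μ] (hf : Integrable f μ) {m n : ℕ} (h : m ≤ n) :
    ∫ x, prefixProd f h x ∂(Measure.pi fun _ => μ) = (∫ x, f x ∂μ) ^ m := by
  induction m generalizing n with
  | zero => simp [prefixProd]
  | succ m ih =>
    obtain ⟨n, rfl⟩ : ∃ k, n = k + 1 := ⟨n - 1, by omega⟩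
    rw [← (measurePreserving_piFinSuccAbove (fun _ => μ) 0).symm.integral_comp']
    simp_rw [prefixProd_piFinSuccAbove_zero_symm]
    rw [integral_prod_mul_of_integrable hf (integrable_prefixProd hf _), ih, pow_succ']

end PrefixProdIntegral

section Haar

variable {G : Type*} [Group G] [TopologicalSpace G] [IsTopologicalGroup G] [CompactSpace G]
  [MeasurableSpace G] [BorelSpace G] (μ : Measure G) [μ.IsHaarMeasure]

theorem integral_comp_conj {E : Type*} [NormedAddCommGroup E] [NormedSpace ℝ E] (f : G → E)
    (s : G) : ∫ h, f (s * h * s⁻¹) ∂μ = ∫ h, f h ∂μ :=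
  (MonoidHom.measurePreserving (f := (MulAut.conj s).toMonoidHom)
    ((continuous_const_mul s).mul continuous_const) (MulAut.conj s).surjective rfl).integral_comp
    ((Homeomorph.mulLeft s).trans (Homeomorph.mulRight s⁻¹)).measurableEmbedding f

theorem commute_integral_map_mul_self {A : Type*} [NormedRing A] [NormedSpace ℝ A]
    [IsScalarTower ℝ A A] [SMulCommClass ℝ A A] (ρ : G →* A)
    (hρ : Integrable (fun h => ρ (h * h)) μ) (s : G) :
    Commute (ρ s) (∫ h, ρ (h * h) ∂μ) := by
  have hconj : ∀ h, ρ s * ρ (h * h) = ρ ((s * h * s⁻¹) * (s * h * s⁻¹)) * ρ s := fun h => by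
    simp only [← map_mul]; group
  rw [Commute, SemiconjBy, ← integral_const_mul_of_integrable hρ,
    ← integral_mul_const_of_integrable hρ]
  simp_rw [hconj]
  exact integral_comp_conj μ (fun h => ρ (h * h) * ρ s) s

end Haar

theorem IsIrreducibleRep.exists_eq_smul_one {G V : Type*} [Group G] [NormedAddCommGroup V]
    [InnerProductSpace ℂ V] [FiniteDimensional ℂ V] [Nontrivial V]
    {π : G →* unitary (V →L[ℂ] V)} (hπ : IsIrreducibleRep π) (T : V →L[ℂ] V)
    (hT : ∀ s, Commute (π s : V →L[ℂ] V) T) : ∃ c : ℂ, T = c • 1 := by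
  obtain ⟨c, hc⟩ := Module.End.exists_eigenvalue (T : V →ₗ[ℂ] V)
  refine ⟨c, ?_⟩
  have hinv : ∀ s, ∀ v ∈ Module.End.eigenspace (T : V →ₗ[ℂ] V) c,
      (π s : V →L[ℂ] V) v ∈ Module.End.eigenspace (T : V →ₗ[ℂ] V) c := by
    intro s v hv
    rw [Module.End.mem_eigenspace_iff, ContinuousLinearMap.coe_coe] at hv ⊢
    calc T ((π s : V →L[ℂ] V) v) = (π s : V →L[ℂ] V) (T v) :=
          (DFunLike.congr_fun (hT s).eq v).symm
      _ = c • (π s : V →L[ℂ] V) v := by rw [hv, map_smul]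
  rcases hπ _ hinv with hbot | htop
  · exact absurd hbot hc
  · ext v
    exact Module.End.mem_eigenspace_iff.mp (htop ▸ Submodule.mem_top)

theorem integral_trace {X V : Type*} [MeasurableSpace X] {μ : Measure X} [NormedAddCommGroup V]
    [NormedSpace ℂ V] [FiniteDimensional ℂ V] {F : X → V →L[ℂ] V} (hF : Integrable F μ) :
    ∫ x, LinearMap.trace ℂ V (F x : V →ₗ[ℂ] V) ∂μ =
      LinearMap.trace ℂ V ((∫ x, F x ∂μ : V →L[ℂ] V) : V →ₗ[ℂ] V) :=
  (LinearMap.toContinuousLinearMap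
    ((LinearMap.trace ℂ V).comp (ContinuousLinearMap.coeLM ℂ))).integral_comp_comm hF

theorem char_integral_nonorientable_surface_word_general {G : Type*} [Group G] [TopologicalSpace G]
    [IsTopologicalGroup G] [CompactSpace G] [MeasurableSpace G] [BorelSpace G]
    (μ : Measure G) [μ.IsHaarMeasure] [IsProbabilityMeasure μ]
    (g r : ℕ) (hg : 1 ≤ g) (hr : g ≤ r)
    {V : Type*} [NormedAddCommGroup V] [InnerProductSpace ℂ V] [FiniteDimensional ℂ V]
    [Nontrivial V]
    (π : G →* unitary (V →L[ℂ] V)) (hπ : Continuous fun x : G => (π x : V →L[ℂ] V))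
    (hirr : IsIrreducibleRep π) :
    ∫ gs : Fin r → G,
        LinearMap.trace ℂ V
          ((π (FreeGroup.lift gs (nonorientableSurfaceWord g r hr)) : V →L[ℂ] V) : V →ₗ[ℂ] V)
      ∂(Measure.pi fun _ => μ)
      = (∫ h : G, LinearMap.trace ℂ V ((π (h * h) : V →L[ℂ] V) : V →ₗ[ℂ] V) ∂μ) ^ g /
          (Module.finrank ℂ V : ℂ) ^ (g - 1) := by
  let ρ : G →* (V →L[ℂ] V) := (unitary (V →L[ℂ] V)).subtype.comp π
  have hsq : Integrable (fun h => ρ (h * h)) μ :=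
    (hπ.comp (continuous_id.mul continuous_id)).integrable_of_hasCompactSupport
      (.of_compactSpace _)
  obtain ⟨c, hc⟩ := hirr.exists_eq_smul_one _ (commute_integral_map_mul_self μ ρ hsq)
  have hword : ∀ gs : Fin r → G, (π (FreeGroup.lift gs (nonorientableSurfaceWord g r hr)) :
      V →L[ℂ] V) = prefixProd (fun h => ρ (h * h)) hr gs :=
    map_lift_nonorientableSurfaceWord ρ hr
  have hFS : ∫ h, LinearMap.trace ℂ V ((π (h * h) : V →L[ℂ] V) : V →ₗ[ℂ] V) ∂μ =
      LinearMap.trace ℂ V ((∫ h, ρ (h * h) ∂μ : V →L[ℂ] V) : V →ₗ[ℂ] V) :=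
    integral_trace hsq
  simp_rw [hword]
  rw [integral_trace (integrable_prefixProd hsq hr), integral_prefixProd hsq hr, hFS, hc]
  simp only [smul_pow, one_pow, ContinuousLinearMap.toLinearMap_smul,
    ContinuousLinearMap.toLinearMap_one, map_smul, LinearMap.trace_one, smul_eq_mul]
  have hd : (Module.finrank ℂ V : ℂ) ≠ 0 := Nat.cast_ne_zero.mpr Module.finrank_pos.ne'
  obtain ⟨k, rfl⟩ := Nat.exists_eq_add_of_le' hg
  rw [Nat.add_sub_cancel]
  field_simp
  ring

/-- For every continuous irreducible unitary representation `π` of a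
compact Hausdorff group `G` on a nonzero finite-dimensional complex inner product space
`V`, the expected character value of the non-orientable surface word `t_g` is
`FS(π)^g / (dim V)^{g-1}`, where `FS(π) = ∫_G tr(π(h²)) dμ(h)` is the Frobenius–Schur
indicator of `π`. -/
theorem char_integral_nonorientable_surface_word {G : Type*} [Group G] [TopologicalSpace G]
    [IsTopologicalGroup G] [CompactSpace G] [T2Space G] [MeasurableSpace G] [BorelSpace G]
    (μ : Measure G) [μ.IsHaarMeasure] [IsProbabilityMeasure μ]
    (g r : ℕ) (hg : 1 ≤ g) (hr : g ≤ r)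
    {V : Type*} [NormedAddCommGroup V] [InnerProductSpace ℂ V] [FiniteDimensional ℂ V]
    [Nontrivial V]
    (π : G →* unitary (V →L[ℂ] V)) (hπ : Continuous fun x : G => (π x : V →L[ℂ] V))
    (hirr : IsIrreducibleRep π) :
    ∫ gs : Fin r → G,
        LinearMap.trace ℂ V
          ((π (FreeGroup.lift gs (nonorientableSurfaceWord g r hr)) : V →L[ℂ] V) : V →ₗ[ℂ] V)
      ∂(Measure.pi fun _ => μ)
      = (∫ h : G, LinearMap.trace ℂ V ((π (h * h) : V →L[ℂ] V) : V →ₗ[ℂ] V) ∂μ) ^ g /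
          (Module.finrank ℂ V : ℂ) ^ (g - 1) :=
  char_integral_nonorientable_surface_word_general μ g r hg hr π hπ hirr
end

section
/- Let w₁, w₂ ∈ F_r, and suppose the subgroup of F_r generated by the orbit Aut(F_r)·w₁ is different from the subgroup generated by the orbit Aut(F_r)·w₂. Then there exists an Aut(F_r)-invariant positive definite function τ : F_r → ℂ with τ(w₁) ≠ τ(w₂). -/
open MeasureTheory ComplexOrder

open scoped Classical in
lemma indicator_posdef {Γ : Type*} [Group Γ] (H : Subgroup Γ) :
    IsPositiveDefinite (fun w => if w ∈ H then (1 : ℂ) else 0) := by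
  intro S a
  have hf : ∀ γ γ' : Γ, (γ' * γ⁻¹ ∈ H) ↔
      (QuotientGroup.mk γ'⁻¹ : Γ ⧸ H) = QuotientGroup.mk γ⁻¹ := by
    intro γ γ'
    rw [QuotientGroup.eq, inv_inv]
  set f : Γ → Γ ⧸ H := fun γ => QuotientGroup.mk γ⁻¹ with hfdef
  set B : Γ ⧸ H → ℂ := fun c => ∑ γ ∈ S.filter (fun x => f x = c), a γ with hB
  have key : ∑ γ ∈ S, ∑ γ' ∈ S, (if γ' * γ⁻¹ ∈ H then (1:ℂ) else 0) * a γ' * (starRingEnd ℂ) (a γ)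
      = ∑ c ∈ S.image f, B c * (starRingEnd ℂ) (B c) := by
    have step1 : ∀ γ ∈ S, ∑ γ' ∈ S, (if γ' * γ⁻¹ ∈ H then (1:ℂ) else 0) * a γ' * (starRingEnd ℂ) (a γ)
        = B (f γ) * (starRingEnd ℂ) (a γ) := by
      intro γ _
      have : B (f γ) = ∑ γ' ∈ S, if f γ' = f γ then a γ' else 0 := by
        rw [hB]; exact Finset.sum_filter _ _
      rw [this, Finset.sum_mul]
      apply Finset.sum_congr rfl
      intro γ' _
      by_cases hmem : γ' * γ⁻¹ ∈ H
      · rw [if_pos hmem, if_pos ((hf γ γ').mp hmem)]; ring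
      · rw [if_neg hmem, if_neg (fun hc => hmem ((hf γ γ').mpr hc))]; ring
    rw [Finset.sum_congr rfl step1]
    rw [← Finset.sum_fiberwise_of_maps_to (g := f) (fun x hx => Finset.mem_image_of_mem f hx)]
    apply Finset.sum_congr rfl
    intro c _
    have hc : ∀ γ ∈ S.filter (fun x => f x = c), B (f γ) * (starRingEnd ℂ) (a γ)
        = B c * (starRingEnd ℂ) (a γ) := by
      intro γ hγ
      rw [(Finset.mem_filter.mp hγ).2]
    rw [Finset.sum_congr rfl hc, ← Finset.mul_sum, ← map_sum]
  rw [key]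
  apply Finset.sum_nonneg
  intro c _
  rw [Complex.mul_conj]
  exact_mod_cast Complex.normSq_nonneg (B c)

lemma orbit_closure_char {G : Type*} [Group G] (w₀ : G) (α : G ≃* G) (x : G) :
    α x ∈ Subgroup.closure {w : G | ∃ β : G ≃* G, w = β w₀} ↔
      x ∈ Subgroup.closure {w : G | ∃ β : G ≃* G, w = β w₀} := by
  have hmap : ∀ γ : G ≃* G,
      (Subgroup.closure {w : G | ∃ β : G ≃* G, w = β w₀}).map γ.toMonoidHom
        = Subgroup.closure {w : G | ∃ β : G ≃* G, w = β w₀} := by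
    intro γ
    rw [MonoidHom.map_closure]
    congr 1
    ext y
    constructor
    · rintro ⟨z, ⟨β, rfl⟩, rfl⟩
      exact ⟨β.trans γ, rfl⟩
    · rintro ⟨β, rfl⟩
      exact ⟨γ.symm (β w₀), ⟨β.trans γ.symm, rfl⟩, γ.apply_symm_apply _⟩
  constructor
  · intro hx
    rw [← hmap α.symm]
    exact ⟨α x, hx, α.symm_apply_apply x⟩
  · intro hx
    rw [← hmap α]
    exact ⟨x, hx, rfl⟩

/-- If the subgroups of `F_r` generated by the orbits `Aut(F_r)·w₁` and
`Aut(F_r)·w₂` are different, then some `Aut(F_r)`-invariant positive definite function on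
`F_r` separates `w₁` from `w₂`. -/
theorem posdef_separates_of_orbit_closures_ne (r : ℕ) (w₁ w₂ : FreeGroup (Fin r))
    (h : Subgroup.closure {w : FreeGroup (Fin r) |
          ∃ α : FreeGroup (Fin r) ≃* FreeGroup (Fin r), w = α w₁}
        ≠ Subgroup.closure {w : FreeGroup (Fin r) |
          ∃ α : FreeGroup (Fin r) ≃* FreeGroup (Fin r), w = α w₂}) :
    ∃ τ : FreeGroup (Fin r) → ℂ, IsPositiveDefinite τ ∧
      (∀ (α : FreeGroup (Fin r) ≃* FreeGroup (Fin r)) (w : FreeGroup (Fin r)),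
        τ (α w) = τ w) ∧
      τ w₁ ≠ τ w₂ := by
  classical
  set H₁ : Subgroup (FreeGroup (Fin r)) := Subgroup.closure
    {w : FreeGroup (Fin r) | ∃ α : FreeGroup (Fin r) ≃* FreeGroup (Fin r), w = α w₁} with hH₁
  set H₂ : Subgroup (FreeGroup (Fin r)) := Subgroup.closure
    {w : FreeGroup (Fin r) | ∃ α : FreeGroup (Fin r) ≃* FreeGroup (Fin r), w = α w₂} with hH₂
  have hself₁ : w₁ ∈ H₁ := Subgroup.subset_closure ⟨MulEquiv.refl _, rfl⟩
  have hself₂ : w₂ ∈ H₂ := Subgroup.subset_closure ⟨MulEquiv.refl _, rfl⟩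
  have hkey : w₂ ∉ H₁ ∨ w₁ ∉ H₂ := by
    by_contra hc
    push_neg at hc
    obtain ⟨h2, h1⟩ := hc
    apply h
    apply le_antisymm
    · rw [hH₂, Subgroup.closure_le]
      rintro x ⟨α, rfl⟩
      exact (orbit_closure_char w₂ α w₁).mpr h1
    · rw [hH₁, Subgroup.closure_le]
      rintro x ⟨α, rfl⟩
      exact (orbit_closure_char w₁ α w₂).mpr h2
  rcases hkey with hk | hk
  · refine ⟨fun w => if w ∈ H₁ then (1:ℂ) else 0, ?_, ?_, ?_⟩
    · have := indicator_posdef H₁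
      convert this using 2
    · intro α w
      simp only [hH₁, orbit_closure_char w₁ α w]
    · simp only [if_pos hself₁, if_neg hk]
      exact one_ne_zero
  · refine ⟨fun w => if w ∈ H₂ then (1:ℂ) else 0, ?_, ?_, ?_⟩
    · have := indicator_posdef H₂
      convert this using 2
    · intro α w
      simp only [hH₂, orbit_closure_char w₂ α w]
    · simp only [if_pos hself₂, if_neg hk]
      exact zero_ne_one
end

section
/- Let Γ be a group and let τ : Γ → ℂ be a positive definite function with τ(e) = 1 that is invariant under every automorphism of Γ (τ(α(γ)) = τ(γ) for all α ∈ Aut(Γ), γ ∈ Γ). Then the function τ⁺ on the semidirect product Γ ⋊ Aut(Γ) (with Aut(Γ) acting naturally on Γ) defined by τ⁺(γ, α) = τ(γ) is a positive definite function on Γ ⋊ Aut(Γ). -/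
open MeasureTheory ComplexOrder

/-- If `τ` is an `Aut(Γ)`-invariant positive definite function on a group
`Γ` with `τ(e) = 1`, then `τ⁺(γ, α) := τ(γ)` is a positive definite function on the
semidirect product `Γ ⋊ Aut(Γ)`. -/
theorem posdef_extend_semidirect {Γ : Type*} [Group Γ] (τ : Γ → ℂ)
    (hpd : IsPositiveDefinite τ) (h1 : τ 1 = 1)
    (hinv : ∀ (α : MulAut Γ) (γ : Γ), τ (α γ) = τ γ) :
    IsPositiveDefinite
      (fun x : SemidirectProduct Γ (MulAut Γ) (MonoidHom.id (MulAut Γ)) => τ x.left) := by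
  intro S a
  classical
  set f : SemidirectProduct Γ (MulAut Γ) (MonoidHom.id (MulAut Γ)) → Γ :=
    fun x => x.right⁻¹ x.left with hf
  have key : ∀ x y : SemidirectProduct Γ (MulAut Γ) (MonoidHom.id (MulAut Γ)),
      τ ((y * x⁻¹).left) = τ (f y * (f x)⁻¹) := by
    intro x y
    rw [← hinv y.right⁻¹ ((y * x⁻¹).left)]
    congr 1
    simp [hf, SemidirectProduct.mul_left, SemidirectProduct.inv_left,
      SemidirectProduct.inv_right, map_mul, mul_inv_rev]
  set T := S.image f with hT
  set b : Γ → ℂ := fun g => ∑ x ∈ S.filter (fun x => f x = g), a x with hb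
  have hmaps : ∀ x ∈ S, f x ∈ T := fun x hx => Finset.mem_image_of_mem f hx
  have heq : ∑ γ ∈ S, ∑ γ' ∈ S, τ ((γ' * γ⁻¹).left) * a γ' * (starRingEnd ℂ) (a γ)
      = ∑ g ∈ T, ∑ g' ∈ T, τ (g' * g⁻¹) * b g' * (starRingEnd ℂ) (b g) := by
    rw [← Finset.sum_fiberwise_of_maps_to hmaps]
    refine Finset.sum_congr rfl fun g hg => ?_
    have this : ∀ γ ∈ S.filter (fun x => f x = g),
        ∑ γ' ∈ S, τ ((γ' * γ⁻¹).left) * a γ' * (starRingEnd ℂ) (a γ)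
        = (∑ g' ∈ T, τ (g' * g⁻¹) * b g') * (starRingEnd ℂ) (a γ) := by
      intro γ hγ
      obtain ⟨hγS, hγf⟩ := Finset.mem_filter.mp hγ
      rw [← Finset.sum_fiberwise_of_maps_to hmaps
        (fun γ' => τ ((γ' * γ⁻¹).left) * a γ' * (starRingEnd ℂ) (a γ)), Finset.sum_mul]
      refine Finset.sum_congr rfl fun g' hg' => ?_
      have hbg' : b g' = ∑ x ∈ S.filter (fun x => f x = g'), a x := rfl
      rw [hbg', Finset.mul_sum, Finset.sum_mul]
      refine Finset.sum_congr rfl fun γ' hγ' => ?_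
      obtain ⟨hγ'S, hγ'f⟩ := Finset.mem_filter.mp hγ'
      rw [key, hγf, hγ'f]
    have hbg : b g = ∑ x ∈ S.filter (fun x => f x = g), a x := rfl
    calc ∑ γ ∈ S.filter (fun x => f x = g),
          ∑ γ' ∈ S, τ ((γ' * γ⁻¹).left) * a γ' * (starRingEnd ℂ) (a γ)
        = ∑ γ ∈ S.filter (fun x => f x = g),
            (∑ g' ∈ T, τ (g' * g⁻¹) * b g') * (starRingEnd ℂ) (a γ) :=
          Finset.sum_congr rfl this
      _ = (∑ g' ∈ T, τ (g' * g⁻¹) * b g') * (starRingEnd ℂ) (b g) := by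
          rw [← Finset.mul_sum, hbg, map_sum]
      _ = ∑ g' ∈ T, τ (g' * g⁻¹) * b g' * (starRingEnd ℂ) (b g) := Finset.sum_mul ..
  rw [heq]
  exact hpd T b
end

section
/- Let r ≥ 1 and let x = (x_1,…,x_r), y = (y_1,…,y_r) ∈ ℤ^r. Then x and y lie in the same GL_r(ℤ)-orbit (i.e., there exists an invertible r×r integer matrix M with M·x = y) if and only if for every finite abelian group G, the pushforward of the uniform probability measure on G^r under the map (g_1,…,g_r) ↦ x_1 g_1 + ⋯ + x_r g_r equals the pushforward of the uniform probability measure on G^r under (g_1,…,g_r) ↦ y_1 g_1 + ⋯ + y_r g_r. -/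
/-!
Write `φ_x(g) = ∑ xᵢ • gᵢ`. If `y = M x` with `M ∈ GL_r(ℤ)`, then `φ_y = φ_x ∘ τ` where
`τ(g)_j = ∑ᵢ M_ij • gᵢ` is a bijection of `G^r`, and the uniform measure is invariant under
bijections.

Conversely, the pushforward measure remembers the range of `φ_x`, which on `G = ℤ/n` is the image
of the ideal `I_x ⊆ ℤ` generated by the coordinates of `x`; these images for all `n` determine
`I_x`. Finally, `GL_r(ℤ)` acts transitively on vectors with a given content ideal `(d)`: for
`d ≠ 0` write `x = d • x'` with `f x' = 1` for some functional `f`; then `ℤ^r ≃ ℤ × ker f` sends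
`x'` to `(1, 0)`, and any two such kernels are free of rank `r - 1`.
-/

open MeasureTheory Matrix

namespace LinearMap

variable {R M : Type*} [Ring R] [AddCommGroup M] [Module R M]

def equivProdKer (f : M →ₗ[R] R) {u : M} (hu : f u = 1) : M ≃ₗ[R] R × ker f where
  toFun v := (f v, ⟨v - f v • u, by simp [hu]⟩)
  invFun p := p.1 • u + p.2
  map_add' v w := by ext <;> simp [add_smul]; abel
  map_smul' c v := by ext <;> simp [mul_smul, smul_sub]
  left_inv v := by simp
  right_inv p := by ext <;> simp [hu]

theorem equivProdKer_apply_self (f : M →ₗ[R] R) {u : M} (hu : f u = 1) :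
    f.equivProdKer hu u = (1, 0) := by
  ext <;> simp [equivProdKer, hu]

end LinearMap

section PrincipalIdealDomain

variable {R : Type*} [CommRing R] [IsDomain R]

section Module

variable [IsPrincipalIdealRing R] {M : Type*} [AddCommGroup M] [Module R M] [Module.Free R M]
  [Module.Finite R M]

theorem LinearMap.finrank_ker_add_one_of_apply_eq_one (f : M →ₗ[R] R) {u : M} (hu : f u = 1) :
    Module.finrank R (ker f) + 1 = Module.finrank R M := by
  rw [(f.equivProdKer hu).finrank_eq, Module.finrank_prod, Module.finrank_self, add_comm]

theorem exists_linearEquiv_apply_eq_of_apply_eq_one (f g : M →ₗ[R] R) {u v : M}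
    (hu : f u = 1) (hv : g v = 1) : ∃ e : M ≃ₗ[R] M, e u = v := by
  have hrank : Module.finrank R (LinearMap.ker f) = Module.finrank R (LinearMap.ker g) := by
    have := f.finrank_ker_add_one_of_apply_eq_one hu
    have := g.finrank_ker_add_one_of_apply_eq_one hv
    omega
  refine ⟨(f.equivProdKer hu).trans (((LinearEquiv.refl R R).prodCongr
    (LinearEquiv.ofFinrankEq _ _ hrank)).trans (g.equivProdKer hv).symm), ?_⟩
  simp [LinearMap.equivProdKer_apply_self, LinearEquiv.symm_apply_eq]

end Module

variable {ι : Type*} [Fintype ι]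

theorem exists_smul_eq_and_apply_eq_one_of_span_range_eq {x : ι → R} {d : R}
    (hx : Ideal.span (Set.range x) = Ideal.span {d}) (hd : d ≠ 0) :
    ∃ x' : ι → R, d • x' = x ∧ ∃ f : (ι → R) →ₗ[R] R, f x' = 1 := by
  have hmem : ∀ i, ∃ a, a * d = x i := fun i =>
    Ideal.mem_span_singleton'.1 (hx ▸ Ideal.subset_span (Set.mem_range_self i))
  choose x' hx' using hmem
  obtain ⟨c, hc⟩ := Ideal.mem_span_range_iff_exists_fun.1 (hx ▸ Ideal.mem_span_singleton_self d)
  refine ⟨x', funext fun i => by simp [← hx', mul_comm], Fintype.linearCombination R c, ?_⟩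
  apply mul_left_cancel₀ hd
  calc d * Fintype.linearCombination R c x' = ∑ i, c i * (x' i * d) := by
        simp only [Fintype.linearCombination_apply, smul_eq_mul, Finset.mul_sum]
        exact Finset.sum_congr rfl fun i _ => by ring
    _ = d * 1 := by simp only [hx', hc, mul_one]

theorem exists_linearEquiv_apply_eq_of_span_range_eq [IsPrincipalIdealRing R] {x y : ι → R}
    (h : Ideal.span (Set.range x) = Ideal.span (Set.range y)) :
    ∃ e : (ι → R) ≃ₗ[R] (ι → R), e x = y := by
  obtain ⟨d, hd⟩ := Submodule.IsPrincipal.principal (Ideal.span (Set.range x))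
  rcases eq_or_ne d 0 with rfl | hd0
  · have eq_zero : ∀ z : ι → R, Ideal.span (Set.range z) = Ideal.span {0} → z = 0 := by
      intro z hz
      rw [Ideal.span_singleton_zero, Ideal.span_eq_bot] at hz
      exact funext fun i => hz _ (Set.mem_range_self i)
    rw [eq_zero x hd, eq_zero y (h ▸ hd)]
    exact ⟨LinearEquiv.refl R _, rfl⟩
  obtain ⟨x', rfl, f, hf⟩ := exists_smul_eq_and_apply_eq_one_of_span_range_eq hd hd0
  obtain ⟨y', rfl, g, hg⟩ := exists_smul_eq_and_apply_eq_one_of_span_range_eq (h ▸ hd) hd0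
  obtain ⟨e, he⟩ := exists_linearEquiv_apply_eq_of_apply_eq_one f g hf hg
  exact ⟨e, by rw [map_smul, he]⟩

end PrincipalIdealDomain

namespace Matrix

variable {ι R G : Type*} [Fintype ι] [CommRing R] [AddCommGroup G] [Module R G]

theorem GeneralLinearGroup.exists_mulVec_eq_apply [DecidableEq ι]
    (e : (ι → R) ≃ₗ[R] (ι → R)) (x : ι → R) : ∃ M : GL ι R, (M : Matrix ι ι R) *ᵥ x = e x :=
  ⟨toLin.symm (LinearMap.GeneralLinearGroup.ofLinearEquiv e), LinearMap.toMatrix'_mulVec _ _⟩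

def smulVecMul (g : ι → G) (A : Matrix ι ι R) : ι → G := fun j => ∑ i, A i j • g i

theorem smulVecMul_smulVecMul (g : ι → G) (A B : Matrix ι ι R) :
    smulVecMul (smulVecMul g A) B = smulVecMul g (A * B) := by
  funext k
  simp only [smulVecMul, mul_apply, Finset.smul_sum, Finset.sum_smul, smul_smul]
  rw [Finset.sum_comm]
  exact Finset.sum_congr rfl fun i _ => Finset.sum_congr rfl fun j _ => by rw [mul_comm]

theorem smulVecMul_one [DecidableEq ι] (g : ι → G) : smulVecMul g (1 : Matrix ι ι R) = g := by
  funext j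
  simp [smulVecMul, one_apply, ite_smul]

theorem sum_mulVec_smul (A : Matrix ι ι R) (x : ι → R) (g : ι → G) :
    ∑ i, (A *ᵥ x) i • g i = ∑ j, x j • smulVecMul g A j := by
  simp only [smulVecMul, mulVec, dotProduct, Finset.sum_smul, Finset.smul_sum, smul_smul]
  rw [Finset.sum_comm]
  exact Finset.sum_congr rfl fun j _ => Finset.sum_congr rfl fun i _ => by rw [mul_comm]

theorem GeneralLinearGroup.bijective_smulVecMul [DecidableEq ι] (M : GL ι R) :
    Function.Bijective fun g : ι → G => smulVecMul g (M : Matrix ι ι R) :=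
  Function.bijective_iff_has_inverse.2 ⟨fun g => smulVecMul g ((M⁻¹ : GL ι R) : Matrix ι ι R),
    fun g => by dsimp only; rw [smulVecMul_smulVecMul, M.mul_inv, smulVecMul_one],
    fun g => by dsimp only; rw [smulVecMul_smulVecMul, M.inv_mul, smulVecMul_one]⟩

end Matrix

namespace MeasureTheory.Measure

variable {α β : Type*} [MeasurableSpace α] [Countable α] [MeasurableSingletonClass α]
  [MeasurableSpace β] [MeasurableSingletonClass β]

theorem map_count_of_bijective {τ : α → β} (hτ : Function.Bijective τ) :
    (count : Measure α).map τ = count := by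
  ext s hs
  rw [map_apply (measurable_of_countable τ) hs, ← count_injective_image hτ.injective,
    Set.image_preimage_eq s hτ.surjective]

theorem range_eq_of_map_eq_map {μ : Measure α} (hμ : ∀ a, μ {a} ≠ 0) {f g : α → β}
    (h : μ.map f = μ.map g) : Set.range f = Set.range g := by
  have mem_range_iff : ∀ f : α → β, ∀ b, b ∈ Set.range f ↔ μ.map f {b} ≠ 0 := by
    intro f b
    rw [map_apply (measurable_of_countable f) (measurableSet_singleton b)]
    constructor
    · rintro ⟨a, rfl⟩
      exact fun h0 => hμ a (measure_mono_null (by simp) h0)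
    · intro hne
      obtain ⟨a, ha⟩ := nonempty_of_measure_ne_zero hne
      exact ⟨a, ha⟩
  ext b
  rw [mem_range_iff, mem_range_iff, h]

end MeasureTheory.Measure

theorem map_sum_mulVec_smul {ι R G : Type*} [Fintype ι] [DecidableEq ι] [CommRing R]
    [AddCommGroup G] [Module R G] [Countable G] [MeasurableSpace G] [MeasurableSingletonClass G]
    (M : GL ι R) (x : ι → R) (c : ENNReal) :
    Measure.map (fun g : ι → G => ∑ i, ((M : Matrix ι ι R) *ᵥ x) i • g i) (c • Measure.count)
      = Measure.map (fun g : ι → G => ∑ i, x i • g i) (c • Measure.count) := by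
  simp_rw [sum_mulVec_smul]
  rw [← Function.comp_def (fun g : ι → G => ∑ i, x i • g i),
    ← Measure.map_map (measurable_of_countable _) (measurable_of_countable _), Measure.map_smul,
    Measure.map_count_of_bijective M.bijective_smulVecMul]

theorem range_sum_zsmul_eq_map_span {ι A : Type*} [Fintype ι] [CommRing A] (x : ι → ℤ) :
    Set.range (fun g : ι → A => ∑ i, x i • g i)
      = Ideal.map (Int.castRingHom A) (Ideal.span (Set.range x)) := by
  ext a
  rw [Ideal.map_span, ← Set.range_comp, SetLike.mem_coe, Ideal.mem_span_range_iff_exists_fun]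
  simp [zsmul_eq_mul, mul_comm]

theorem Int.ideal_eq_of_map_zmod_eq {I J : Ideal ℤ}
    (h : ∀ n : ℕ, n ≠ 0 → I.map (Int.castRingHom (ZMod n)) = J.map (Int.castRingHom (ZMod n))) :
    I = J := by
  suffices le : ∀ I J : Ideal ℤ,
      (∀ n : ℕ, n ≠ 0 → I.map (Int.castRingHom (ZMod n)) = J.map (Int.castRingHom (ZMod n))) →
      I ≤ J from
    le_antisymm (le I J h) (le J I fun n hn => (h n hn).symm)
  intro I J h a ha
  obtain ⟨b, rfl⟩ := Submodule.IsPrincipal.principal J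
  have dvd_of_dvd : ∀ n : ℕ, n ≠ 0 → (n : ℤ) ∣ b → (n : ℤ) ∣ a := by
    intro n hn hb
    have := h n hn ▸ Ideal.mem_map_of_mem (Int.castRingHom (ZMod n)) ha
    rw [← ZMod.intCast_zmod_eq_zero_iff_dvd] at hb ⊢
    simpa [Ideal.map_span, hb] using this
  rcases eq_or_ne b 0 with rfl | hb
  · have := dvd_of_dvd (a.natAbs + 1) (by omega) (dvd_zero _)
    rw [Int.eq_zero_of_abs_lt_dvd this (by rw [Int.abs_eq_natAbs]; omega)]
    exact Ideal.zero_mem _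
  · exact Ideal.mem_span_singleton.2
      (Int.natAbs_dvd.1 (dvd_of_dvd _ (by simpa) (Int.natAbs_dvd.2 dvd_rfl)))

theorem glz_orbit_iff_measures_eq_general (r : ℕ) (x y : Fin r → ℤ) :
    (∃ M : Matrix.GeneralLinearGroup (Fin r) ℤ,
        (M : Matrix (Fin r) (Fin r) ℤ) *ᵥ x = y)
      ↔ ∀ (G : Type) [AddCommGroup G] [Fintype G] [MeasurableSpace G]
          [MeasurableSingletonClass G],
          Measure.map (fun gs : Fin r → G => ∑ i : Fin r, x i • gs i)
              ((Fintype.card (Fin r → G) : ENNReal)⁻¹ • Measure.count)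
            = Measure.map (fun gs : Fin r → G => ∑ i : Fin r, y i • gs i)
              ((Fintype.card (Fin r → G) : ENNReal)⁻¹ • Measure.count) := by
  constructor
  · rintro ⟨M, rfl⟩ G _ _ _ _
    exact (map_sum_mulVec_smul M x _).symm
  · intro h
    have hspan : Ideal.span (Set.range x) = Ideal.span (Set.range y) := by
      refine Int.ideal_eq_of_map_zmod_eq fun n hn => ?_
      have : NeZero n := ⟨hn⟩
      apply SetLike.coe_injective
      rw [← range_sum_zsmul_eq_map_span, ← range_sum_zsmul_eq_map_span]
      exact Measure.range_eq_of_map_eq_map (fun _ => by simp) (h (ZMod n))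
    obtain ⟨e, he⟩ := exists_linearEquiv_apply_eq_of_span_range_eq hspan
    obtain ⟨M, hM⟩ := Matrix.GeneralLinearGroup.exists_mulVec_eq_apply e x
    exact ⟨M, hM.trans he⟩

/-- Two integer vectors `x, y ∈ ℤ^r` lie in the same `GL_r(ℤ)`-orbit if
and only if, for every finite abelian group `G`, the pushforward of the uniform probability
measure on `G^r` under `(g_1,…,g_r) ↦ ∑ x_i • g_i` equals the pushforward under
`(g_1,…,g_r) ↦ ∑ y_i • g_i`. -/
theorem glz_orbit_iff_measures_eq (r : ℕ) (hr : 1 ≤ r) (x y : Fin r → ℤ) :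
    (∃ M : Matrix.GeneralLinearGroup (Fin r) ℤ,
        (M : Matrix (Fin r) (Fin r) ℤ) *ᵥ x = y)
      ↔ ∀ (G : Type) [AddCommGroup G] [Fintype G] [MeasurableSpace G]
          [MeasurableSingletonClass G],
          Measure.map (fun gs : Fin r → G => ∑ i : Fin r, x i • gs i)
              ((Fintype.card (Fin r → G) : ENNReal)⁻¹ • Measure.count)
            = Measure.map (fun gs : Fin r → G => ∑ i : Fin r, y i • gs i)
              ((Fintype.card (Fin r → G) : ENNReal)⁻¹ • Measure.count) :=
  glz_orbit_iff_measures_eq_general r x y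
end
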